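/- arXiv:2602.01453 — 4 statements merged into one kernel-verified Lean document; each statement's English description precedes it below -/
import Mathlib

section
/- Let S be a finite type, H a natural number, and α ≥ 0. Let (M_h)_{h<H} and (M'_h)_{h<H} be matrices S → S → ℝ such that each M'_h is substochastic (all entries nonnegative and every row sums to at most 1). Let q₀ = q'₀ : S → ℝ be a common initial vector and define occupancy vectors recursively by q_{h+1} := q_h ⬝ M_h and q'_{h+1} := q'_h ⬝ M'_h. Suppose that for every h < H the following implication holds: if ‖q_h − q'_h‖₁ ≤ α·h then ‖q_h ⬝ (M_h − M'_h)‖₁ ≤ α. Then for every h ≤ H, ‖q_h − q'_h‖₁ ≤ α·h. -/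
open Finset

/-! The occupancy error `e_h = ‖q_h - q'_h‖₁` obeys `e_{h+1} ≤ ‖q_h (M_h - M'_h)‖₁ + e_h`: split
`q_h M_h - q'_h M'_h = q_h (M_h - M'_h) + (q_h - q'_h) M'_h` and use that right
multiplication by a substochastic matrix does not increase the `ℓ¹` norm. Each step thus
adds at most `α`, and induction on `h` gives `e_h ≤ α h`. -/

section Substochastic

variable {ι κ : Type*} [Fintype ι] [Fintype κ]

theorem sum_abs_vecMul_le_of_substochastic (v : ι → ℝ) (P : ι → κ → ℝ)
    (hP : ∀ i j, 0 ≤ P i j) (hrow : ∀ i, ∑ j, P i j ≤ 1) :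
    ∑ j, |∑ i, v i * P i j| ≤ ∑ i, |v i| :=
  calc ∑ j, |∑ i, v i * P i j|
      ≤ ∑ j, ∑ i, |v i| * P i j := by
        gcongr with j
        refine (abs_sum_le_sum_abs _ _).trans_eq ?_
        simp only [abs_mul, abs_of_nonneg (hP _ j)]
    _ = ∑ i, |v i| * ∑ j, P i j := by
        rw [sum_comm]
        simp only [mul_sum]
    _ ≤ ∑ i, |v i| := by
        gcongr with i
        exact mul_le_of_le_one_right (abs_nonneg _) (hrow i)

theorem sum_abs_vecMul_sub_vecMul_le (q q' : ι → ℝ) (M M' : ι → κ → ℝ)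
    (hM' : ∀ i j, 0 ≤ M' i j) (hrow : ∀ i, ∑ j, M' i j ≤ 1) :
    ∑ j, |∑ i, q i * M i j - ∑ i, q' i * M' i j| ≤
      ∑ j, |∑ i, q i * (M i j - M' i j)| + ∑ i, |q i - q' i| := by
  have hsplit : ∀ j, ∑ i, q i * M i j - ∑ i, q' i * M' i j =
      ∑ i, q i * (M i j - M' i j) + ∑ i, (q i - q' i) * M' i j := fun j => by
    rw [← sum_sub_distrib, ← sum_add_distrib]
    congr 1 with i
    ring
  calc ∑ j, |∑ i, q i * M i j - ∑ i, q' i * M' i j|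
      ≤ ∑ j, (|∑ i, q i * (M i j - M' i j)| + |∑ i, (q i - q' i) * M' i j|) := by
        gcongr with j
        rw [hsplit j]
        exact abs_add_le _ _
    _ ≤ ∑ j, |∑ i, q i * (M i j - M' i j)| + ∑ i, |q i - q' i| := by
        rw [sum_add_distrib]
        gcongr
        exact sum_abs_vecMul_le_of_substochastic _ M' hM' hrow

end Substochastic

theorem occupancy_error_accumulation_general {S : Type*} [Fintype S]
    (H : ℕ) (α : ℝ)
    (M M' : ℕ → S → S → ℝ)
    (hM'nn : ∀ h < H, ∀ s s', 0 ≤ M' h s s')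
    (hM'row : ∀ h < H, ∀ s, ∑ s', M' h s s' ≤ 1)
    (q q' : ℕ → S → ℝ)
    (hq0 : q 0 = q' 0)
    (hqrec : ∀ h < H, ∀ s', q (h + 1) s' = ∑ s, q h s * M h s s')
    (hq'rec : ∀ h < H, ∀ s', q' (h + 1) s' = ∑ s, q' h s * M' h s s')
    (hstep : ∀ h < H, (∑ s, |q h s - q' h s| ≤ α * h) →
      ∑ s', |∑ s, q h s * (M h s s' - M' h s s')| ≤ α) :
    ∀ h ≤ H, ∑ s, |q h s - q' h s| ≤ α * h := by
  intro h hh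
  induction h with
  | zero => simp [hq0]
  | succ n ih =>
    have hn : n < H := hh
    have ihn := ih hn.le
    calc ∑ s', |q (n + 1) s' - q' (n + 1) s'|
        = ∑ s', |∑ s, q n s * M n s s' - ∑ s, q' n s * M' n s s'| := by
          simp only [hqrec n hn, hq'rec n hn]
      _ ≤ ∑ s', |∑ s, q n s * (M n s s' - M' n s s')| + ∑ s, |q n s - q' n s| :=
          sum_abs_vecMul_sub_vecMul_le _ _ _ _ (hM'nn n hn) (hM'row n hn)
      _ ≤ α + α * n := add_le_add (hstep n hn ihn) ihn
      _ = α * (n + 1 : ℕ) := by push_cast; ring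

/-- Occupancy-measure error accumulation. If the per-step
policy-weighted model error is at most `α` whenever the current occupancy
error is at most `α·h`, then for every `h ≤ H` the occupancy error at step `h`
is at most `α·h`. -/
theorem occupancy_error_accumulation {S : Type*} [Fintype S]
    (H : ℕ) (α : ℝ) (hα : 0 ≤ α)
    (M M' : ℕ → S → S → ℝ)
    (hM'nn : ∀ h < H, ∀ s s', 0 ≤ M' h s s')
    (hM'row : ∀ h < H, ∀ s, ∑ s', M' h s s' ≤ 1)
    (q q' : ℕ → S → ℝ)
    (hq0 : q 0 = q' 0)
    (hqrec : ∀ h < H, ∀ s', q (h + 1) s' = ∑ s, q h s * M h s s')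
    (hq'rec : ∀ h < H, ∀ s', q' (h + 1) s' = ∑ s, q' h s * M' h s s')
    (hstep : ∀ h < H, (∑ s, |q h s - q' h s| ≤ α * h) →
      ∑ s', |∑ s, q h s * (M h s s' - M' h s s')| ≤ α) :
    ∀ h ≤ H, ∑ s, |q h s - q' h s| ≤ α * h :=
  occupancy_error_accumulation_general H α M M' hM'nn hM'row q q' hq0 hqrec hq'rec hstep
end

section
/- Let S be a finite type with |S| elements, H ≥ 1 a natural number, and β ≥ 0. Let (M_h)_{h<H} be row-stochastic matrices S → S → ℝ (all entries nonnegative and every row sums to exactly 1), let q₀ : S → ℝ be a probability vector (nonnegative entries summing to 1), and let (S_h)_{h<H} be subsets of S. Let q_h be the untruncated occupancy vectors and q^{S·}_h the truncated occupancy vectors, both starting from q₀. Suppose that for every h < H and every s ∉ S_h, q^{S·}_h s ≤ 2β. Then for every family of reward functions f_h : S → ℝ with 0 ≤ f_h s ≤ 1, ∑_{h<H} ∑_{s∈S} f_h s * q_h s ≤ ∑_{h<H} ∑_{s∈S_h} f_h s * q^{S·}_h s + 2β · H² · |S|; i.e., the value under the true dynamics exceeds the value under the truncated dynamics by at most 2β·H²·|S|.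 -/
/-!
Truncation only ever removes mass, so `qS h ≤ q h` pointwise, and the total mass lost by
time `h` is at most the mass sent to the sink at the earlier steps, i.e. at most
`2β·|S|` per step. At step `h` the full value exceeds the truncated one by at most the
mass deficit `‖q h - qS h‖₁ ≤ 2β·|S|·h` plus the truncated mass outside `S_h`, itself
at most `2β·|S|`; summing `2β·|S|·(h + 1) ≤ 2β·|S|·H` over `h < H` gives the claim.
-/

open Finset

section Occupancy

variable {S : Type*}

theorem sum_sum_mul_eq_sum_of_row_sum_eq_one [Fintype S] {P : S → S → ℝ}
    (hP : ∀ s, ∑ s', P s s' = 1) (T : Finset S) (v : S → ℝ) :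
    ∑ s', ∑ s ∈ T, v s * P s s' = ∑ s ∈ T, v s := by
  rw [sum_comm]
  simp_rw [← mul_sum, hP, mul_one]

theorem sum_mul_le_sum_mul_add_sum_sub_add_sum_compl [Fintype S] [DecidableEq S] (T : Finset S)
    {f v w : S → ℝ} (hf : ∀ s, f s ≤ 1) (hv : ∀ s, 0 ≤ v s) (hwv : ∀ s, w s ≤ v s) :
    ∑ s, f s * v s ≤
      ∑ s ∈ T, f s * w s + (∑ s, v s - ∑ s, w s) + ∑ s ∈ Tᶜ, w s := by
  have on_T : ∀ s, f s * v s ≤ f s * w s + (v s - w s) := fun s => by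
    nlinarith [hf s, hwv s]
  have off_T : ∀ s, f s * v s ≤ w s + (v s - w s) := fun s => by
    nlinarith [hf s, hv s]
  calc ∑ s, f s * v s = ∑ s ∈ T, f s * v s + ∑ s ∈ Tᶜ, f s * v s :=
        (sum_add_sum_compl T _).symm
    _ ≤ ∑ s ∈ T, (f s * w s + (v s - w s)) + ∑ s ∈ Tᶜ, (w s + (v s - w s)) :=
        add_le_add (sum_le_sum fun s _ => on_T s) (sum_le_sum fun s _ => off_T s)
    _ = ∑ s ∈ T, f s * w s + (∑ s, v s - ∑ s, w s) + ∑ s ∈ Tᶜ, w s := by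
        rw [sum_add_distrib, sum_add_distrib, ← sum_sub_distrib, ← sum_add_sum_compl T
          (fun s => v s - w s)]
        ring

variable {H : ℕ} {M : ℕ → S → S → ℝ}

theorem occupancy_nonneg (T : ℕ → Finset S) {w : ℕ → S → ℝ}
    (hMnn : ∀ h < H, ∀ s s', 0 ≤ M h s s') (h0 : ∀ s, 0 ≤ w 0 s)
    (hrec : ∀ h < H, ∀ s', w (h + 1) s' = ∑ s ∈ T h, w h s * M h s s') :
    ∀ h ≤ H, ∀ s, 0 ≤ w h s := by
  intro h
  induction h with
  | zero => exact fun _ => h0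
  | succ h ih =>
    intro hh s'
    rw [hrec h hh s']
    exact sum_nonneg fun s _ => mul_nonneg (ih (Nat.le_of_succ_le hh) s) (hMnn h hh s s')

theorem truncated_occupancy_le [Fintype S] (T : ℕ → Finset S) {v w : ℕ → S → ℝ}
    (hMnn : ∀ h < H, ∀ s s', 0 ≤ M h s s') (hv : ∀ h ≤ H, ∀ s, 0 ≤ v h s) (h0 : w 0 = v 0)
    (hvrec : ∀ h < H, ∀ s', v (h + 1) s' = ∑ s, v h s * M h s s')
    (hwrec : ∀ h < H, ∀ s', w (h + 1) s' = ∑ s ∈ T h, w h s * M h s s') :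
    ∀ h ≤ H, ∀ s, w h s ≤ v h s := by
  intro h
  induction h with
  | zero => intro _ s; rw [h0]
  | succ h ih =>
    intro hh s'
    rw [hvrec h hh s', hwrec h hh s']
    calc ∑ s ∈ T h, w h s * M h s s' ≤ ∑ s ∈ T h, v h s * M h s s' :=
          sum_le_sum fun s _ =>
            mul_le_mul_of_nonneg_right (ih (Nat.le_of_succ_le hh) s) (hMnn h hh s s')
      _ ≤ ∑ s, v h s * M h s s' :=
          sum_le_sum_of_subset_of_nonneg (subset_univ _) fun s _ _ =>
            mul_nonneg (hv h (Nat.le_of_succ_le hh) s) (hMnn h hh s s')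

theorem sum_sub_sum_truncated_occupancy_le [Fintype S] [DecidableEq S] (T : ℕ → Finset S)
    {v w : ℕ → S → ℝ} {c : ℝ} (hMrow : ∀ h < H, ∀ s, ∑ s', M h s s' = 1) (h0 : w 0 = v 0)
    (hvrec : ∀ h < H, ∀ s', v (h + 1) s' = ∑ s, v h s * M h s s')
    (hwrec : ∀ h < H, ∀ s', w (h + 1) s' = ∑ s ∈ T h, w h s * M h s s')
    (hleak : ∀ h < H, ∑ s ∈ (T h)ᶜ, w h s ≤ c) :
    ∀ h ≤ H, ∑ s, v h s - ∑ s, w h s ≤ c * h := by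
  intro h
  induction h with
  | zero => intro _; simp [h0]
  | succ h ih =>
    intro hh
    have hv : ∑ s', v (h + 1) s' = ∑ s, v h s := by
      simp_rw [hvrec h hh]
      exact sum_sum_mul_eq_sum_of_row_sum_eq_one (hMrow h hh) univ (v h)
    have hw : ∑ s', w (h + 1) s' = ∑ s ∈ T h, w h s := by
      simp_rw [hwrec h hh]
      exact sum_sum_mul_eq_sum_of_row_sum_eq_one (hMrow h hh) (T h) (w h)
    have hsplit := sum_add_sum_compl (T h) (w h)
    have hdeficit := ih (Nat.le_of_succ_le hh)
    have hleak_h := hleak h hh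
    rw [hv, hw]
    push_cast
    linarith

end Occupancy

theorem full_value_le_truncated_value_add_error_general {S : Type*} [Fintype S] [DecidableEq S]
    (H : ℕ) (β : ℝ) (hβ : 0 ≤ β)
    (M : ℕ → S → S → ℝ)
    (hMnn : ∀ h < H, ∀ s s', 0 ≤ M h s s')
    (hMrow : ∀ h < H, ∀ s, ∑ s', M h s s' = 1)
    (q₀ : S → ℝ) (hq₀nn : ∀ s, 0 ≤ q₀ s)
    (Sh : ℕ → Finset S)
    (q qS : ℕ → S → ℝ)
    (hq0 : q 0 = q₀) (hqS0 : qS 0 = q₀)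
    (hqrec : ∀ h < H, ∀ s', q (h + 1) s' = ∑ s, q h s * M h s s')
    (hqSrec : ∀ h < H, ∀ s', qS (h + 1) s' = ∑ s ∈ Sh h, qS h s * M h s s')
    (htrunc : ∀ h < H, ∀ s ∉ Sh h, qS h s ≤ 2 * β)
    (f : ℕ → S → ℝ) (hf : ∀ h < H, ∀ s, 0 ≤ f h s ∧ f h s ≤ 1) :
    ∑ h ∈ Finset.range H, ∑ s, f h s * q h s ≤
      (∑ h ∈ Finset.range H, ∑ s ∈ Sh h, f h s * qS h s) +
        2 * β * (H : ℝ) ^ 2 * (Fintype.card S : ℝ) := by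
  set c : ℝ := 2 * β * Fintype.card S
  have hq_nonneg := occupancy_nonneg (fun _ => univ) hMnn (hq0 ▸ hq₀nn) hqrec
  have hqS_le := truncated_occupancy_le Sh hMnn hq_nonneg (hqS0.trans hq0.symm) hqrec hqSrec
  have hleak : ∀ h < H, ∑ s ∈ (Sh h)ᶜ, qS h s ≤ c := fun h hh => by
    calc ∑ s ∈ (Sh h)ᶜ, qS h s ≤ (Sh h)ᶜ.card • (2 * β) :=
          sum_le_card_nsmul _ _ _ fun s hs => htrunc h hh s (mem_compl.mp hs)
      _ ≤ c := by
          rw [nsmul_eq_mul, mul_comm]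
          exact mul_le_mul_of_nonneg_left (by exact_mod_cast card_le_univ _) (by positivity)
  have hdeficit := sum_sub_sum_truncated_occupancy_le Sh hMrow (hqS0.trans hq0.symm) hqrec
    hqSrec hleak
  have hstep : ∀ h ∈ range H, ∑ s, f h s * q h s ≤ ∑ s ∈ Sh h, f h s * qS h s + c * H := by
    intro h hh
    have hh : h < H := mem_range.mp hh
    have hsteps : c * h + c ≤ c * H := by
      rw [← mul_add_one]
      exact mul_le_mul_of_nonneg_left (by exact_mod_cast hh) (by positivity)
    have hvalue := sum_mul_le_sum_mul_add_sum_sub_add_sum_compl (Sh h) (fun s => (hf h hh s).2)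
      (hq_nonneg h hh.le) (hqS_le h hh.le)
    linarith [hdeficit h hh.le, hleak h hh]
  calc ∑ h ∈ range H, ∑ s, f h s * q h s
      ≤ ∑ h ∈ range H, (∑ s ∈ Sh h, f h s * qS h s + c * H) := sum_le_sum hstep
    _ = (∑ h ∈ range H, ∑ s ∈ Sh h, f h s * qS h s) +
          2 * β * (H : ℝ) ^ 2 * Fintype.card S := by
        rw [sum_add_distrib, sum_const, card_range, nsmul_eq_mul]
        ring

/-- The value under the true (row-stochastic) dynamics exceeds the
value under the truncated dynamics by at most `2β·H²·|S|`, provided every state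
truncated away at each timestep has (truncated) reachability probability at most
`2β`. -/
theorem full_value_le_truncated_value_add_error {S : Type*} [Fintype S] [DecidableEq S]
    (H : ℕ) (hH : 1 ≤ H) (β : ℝ) (hβ : 0 ≤ β)
    (M : ℕ → S → S → ℝ)
    (hMnn : ∀ h < H, ∀ s s', 0 ≤ M h s s')
    (hMrow : ∀ h < H, ∀ s, ∑ s', M h s s' = 1)
    (q₀ : S → ℝ) (hq₀nn : ∀ s, 0 ≤ q₀ s) (hq₀sum : ∑ s, q₀ s = 1)
    (Sh : ℕ → Finset S)
    (q qS : ℕ → S → ℝ)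
    (hq0 : q 0 = q₀) (hqS0 : qS 0 = q₀)
    (hqrec : ∀ h < H, ∀ s', q (h + 1) s' = ∑ s, q h s * M h s s')
    (hqSrec : ∀ h < H, ∀ s', qS (h + 1) s' = ∑ s ∈ Sh h, qS h s * M h s s')
    (htrunc : ∀ h < H, ∀ s ∉ Sh h, qS h s ≤ 2 * β)
    (f : ℕ → S → ℝ) (hf : ∀ h < H, ∀ s, 0 ≤ f h s ∧ f h s ≤ 1) :
    ∑ h ∈ Finset.range H, ∑ s, f h s * q h s ≤
      (∑ h ∈ Finset.range H, ∑ s ∈ Sh h, f h s * qS h s) +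
        2 * β * (H : ℝ) ^ 2 * (Fintype.card S : ℝ) :=
  full_value_le_truncated_value_add_error_general H β hβ M hMnn hMrow q₀ hq₀nn Sh q qS hq0 hqS0
    hqrec hqSrec htrunc f hf
end

section
/- Let S be a finite type, H a natural number, α ≥ 0, and let (M_h)_{h<H}, (M'_h)_{h<H} be matrices S → S → ℝ with each M'_h substochastic (all entries nonnegative and every row sums to at most 1). Let q₀ = q'₀ : S → ℝ be a common initial vector, and define q_{h+1} := q_h ⬝ M_h and q'_{h+1} := q'_h ⬝ M'_h. Suppose ‖q_h ⬝ (M_h − M'_h)‖₁ ≤ α for every h < H. Then for every family of reward functions f_h : S → ℝ with 0 ≤ f_h s ≤ 1, |∑_{h<H} ∑_{s∈S} f_h s * (q_h s − q'_h s)| ≤ α·H²/2. -/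
/-!
Write `d_h := q_h - q'_h`. Then `d_{h+1} = q_h ⬝ (M_h - M'_h) + d_h ⬝ M'_h`, and right multiplication
by a substochastic matrix does not increase the `ℓ¹` norm, so `‖d_{h+1}‖₁ ≤ α + ‖d_h‖₁`, whence
`‖d_h‖₁ ≤ α h`. A reward in `[0,1]` sees at most `‖d_h‖₁` at step `h`, and `∑_{h<H} α h ≤ α H²/2`.
-/

open Finset

section OccupancyError

variable {S T : Type*} [Fintype S] [Fintype T]

theorem sum_abs_sum_mul_le_of_substochastic (P : S → T → ℝ) (hnn : ∀ s t, 0 ≤ P s t)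
    (hrow : ∀ s, ∑ t, P s t ≤ 1) (v : S → ℝ) :
    ∑ t, |∑ s, v s * P s t| ≤ ∑ s, |v s| :=
  calc ∑ t, |∑ s, v s * P s t|
      ≤ ∑ t, ∑ s, |v s| * P s t := by
        gcongr with t _
        refine (abs_sum_le_sum_abs _ _).trans_eq (sum_congr rfl fun s _ => ?_)
        rw [abs_mul, abs_of_nonneg (hnn s t)]
    _ = ∑ s, |v s| * ∑ t, P s t := by rw [sum_comm]; simp only [mul_sum]
    _ ≤ ∑ s, |v s| := by
        gcongr with s _
        exact mul_le_of_le_one_right (abs_nonneg _) (hrow s)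

theorem sum_abs_sub_sum_mul_le (P P' : S → T → ℝ) (hnn : ∀ s t, 0 ≤ P' s t)
    (hrow : ∀ s, ∑ t, P' s t ≤ 1) (v v' : S → ℝ) :
    ∑ t, |∑ s, v s * P s t - ∑ s, v' s * P' s t|
      ≤ ∑ t, |∑ s, v s * (P s t - P' s t)| + ∑ s, |v s - v' s| := by
  have hsplit : ∀ t, ∑ s, v s * P s t - ∑ s, v' s * P' s t
      = ∑ s, v s * (P s t - P' s t) + ∑ s, (v s - v' s) * P' s t := fun t => by
    simp only [← sum_sub_distrib, ← sum_add_distrib]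
    exact sum_congr rfl fun s _ => by ring
  calc ∑ t, |∑ s, v s * P s t - ∑ s, v' s * P' s t|
      ≤ ∑ t, (|∑ s, v s * (P s t - P' s t)| + |∑ s, (v s - v' s) * P' s t|) := by
        gcongr with t _
        rw [hsplit t]
        exact abs_add_le _ _
    _ ≤ _ := by
        rw [sum_add_distrib]
        gcongr
        exact sum_abs_sum_mul_le_of_substochastic P' hnn hrow _

theorem abs_sum_mul_le_sum_abs_of_abs_le_one (w d : S → ℝ) (hw : ∀ s, |w s| ≤ 1) :
    |∑ s, w s * d s| ≤ ∑ s, |d s| :=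
  (abs_sum_le_sum_abs _ _).trans <| sum_le_sum fun s _ => by
    rw [abs_mul]
    exact mul_le_of_le_one_left (abs_nonneg _) (hw s)

end OccupancyError

theorem le_mul_of_le_add_of_le_zero (a : ℕ → ℝ) (c : ℝ) (N : ℕ) (h0 : a 0 ≤ 0)
    (hsucc : ∀ n < N, a (n + 1) ≤ a n + c) : ∀ n ≤ N, a n ≤ c * n := by
  intro n hn
  induction n with
  | zero => simpa using h0
  | succ n ih =>
    have := hsucc n hn
    push_cast
    linarith [ih (Nat.le_of_succ_le hn)]

theorem sum_range_natCast_le_sq_div_two (n : ℕ) : ∑ i ∈ range n, (i : ℝ) ≤ (n : ℝ) ^ 2 / 2 := by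
  induction n with
  | zero => simp
  | succ n ih =>
    rw [sum_range_succ]
    push_cast
    nlinarith

/-- If the per-step policy-weighted model error is at most `α` at
every timestep `h < H` (with `M'` substochastic and a common initial vector),
then for rewards valued in `[0,1]` the value difference between the two induced
occupancy sequences is at most `α·H²/2`. -/
theorem value_diff_from_model_error {S : Type*} [Fintype S]
    (H : ℕ) (α : ℝ) (hα : 0 ≤ α)
    (M M' : ℕ → S → S → ℝ)
    (hM'nn : ∀ h < H, ∀ s s', 0 ≤ M' h s s')
    (hM'row : ∀ h < H, ∀ s, ∑ s', M' h s s' ≤ 1)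
    (q q' : ℕ → S → ℝ)
    (hq0 : q 0 = q' 0)
    (hqrec : ∀ h < H, ∀ s', q (h + 1) s' = ∑ s, q h s * M h s s')
    (hq'rec : ∀ h < H, ∀ s', q' (h + 1) s' = ∑ s, q' h s * M' h s s')
    (hstep : ∀ h < H, ∑ s', |∑ s, q h s * (M h s s' - M' h s s')| ≤ α)
    (f : ℕ → S → ℝ) (hf : ∀ h < H, ∀ s, 0 ≤ f h s ∧ f h s ≤ 1) :
    |∑ h ∈ Finset.range H, ∑ s, f h s * (q h s - q' h s)| ≤ α * (H : ℝ) ^ 2 / 2 := by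
  have hdist : ∀ h ≤ H, ∑ s, |q h s - q' h s| ≤ α * h := by
    refine le_mul_of_le_add_of_le_zero _ α H (by simp [hq0]) fun h hh => ?_
    simp only [hqrec h hh, hq'rec h hh]
    linarith [sum_abs_sub_sum_mul_le (M h) (M' h) (hM'nn h hh) (hM'row h hh) (q h) (q' h),
      hstep h hh]
  calc |∑ h ∈ range H, ∑ s, f h s * (q h s - q' h s)|
      ≤ ∑ h ∈ range H, |∑ s, f h s * (q h s - q' h s)| := abs_sum_le_sum_abs _ _
    _ ≤ ∑ h ∈ range H, α * h := sum_le_sum fun h hh => by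
        rw [mem_range] at hh
        refine (abs_sum_mul_le_sum_abs_of_abs_le_one _ _ fun s => ?_).trans (hdist h hh.le)
        exact abs_le.mpr ⟨by linarith [(hf h hh s).1], (hf h hh s).2⟩
    _ = α * ∑ h ∈ range H, (h : ℝ) := (mul_sum _ _ _).symm
    _ ≤ α * (H : ℝ) ^ 2 / 2 := by
        rw [mul_div_assoc]
        exact mul_le_mul_of_nonneg_left (sum_range_natCast_le_sq_div_two H) hα
end

section
/- Let (Ω, ℱ, μ) be a probability space, let A ≥ 1 and H ≥ 1 be natural numbers, and let E be a measurable space. Let K : Ω → (Fin H → Fin A) be uniformly distributed over the A^H functions Fin H → Fin A, and let U : Ω → E be measurable and independent of K. For each h < H let g_h : (Fin H → Fin A) → E → Fin A be a measurable function that depends on its first argument only through the coordinates before h, i.e., g_h k u = g_h k' u whenever k j = k' j for all j < h. Then μ({ω : ∀ h < H, g_h (K ω) (U ω) = K ω h}) = A^{−H}. -/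
/-!
For a fixed value `u` of the internal randomness, the guesser's answers define a causal map
`k ↦ (h ↦ g h k u)` on keys, and a causal map has exactly one fixed point: its value at step `h`
is forced by its values before `h`. So the sets `T k` of randomness values that guess the key `k`
correctly partition `E`. Since `K` is independent of `U`, the success probability is
`∑ₖ P(K = k) P(U ∈ T k) = A^(-H) ∑ₖ P(U ∈ T k) = A^(-H)`.
-/

open MeasureTheory ProbabilityTheory Function
open scoped ENNReal

def IsCausal {n : ℕ} {α : Type*} (F : (Fin n → α) → Fin n → α) : Prop :=
  ∀ (k k' : Fin n → α) (h : Fin n), (∀ j < h, k j = k' j) → F k h = F k' h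

namespace IsCausal

variable {n : ℕ} {α : Type*} {F : (Fin n → α) → Fin n → α}

theorem eq_of_isFixedPt (hF : IsCausal F) {k k' : Fin n → α} (hk : IsFixedPt F k)
    (hk' : IsFixedPt F k') : k = k' := by
  funext h
  induction h using WellFoundedLT.induction with
  | _ h ih => rw [← hk.eq, ← hk'.eq]; exact hF k k' h ih

theorem iterate_apply_eq (hF : IsCausal F) (m : ℕ) (k k' : Fin n → α) {h : Fin n}
    (hh : (h : ℕ) < m) : F^[m] k h = F^[m] k' h := by
  induction m generalizing h with
  | zero => omega
  | succ m ih =>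
    rw [iterate_succ_apply', iterate_succ_apply']
    exact hF _ _ h fun j hj => ih (by omega)

theorem isFixedPt_iterate (hF : IsCausal F) (k : Fin n → α) : IsFixedPt F (F^[n] k) := by
  funext h
  rw [← iterate_succ_apply' F, iterate_succ_apply]
  exact hF.iterate_apply_eq n (F k) k h.isLt

theorem existsUnique_isFixedPt [Nonempty α] (hF : IsCausal F) : ∃! k, IsFixedPt F k :=
  let k₀ : Fin n → α := fun _ => Classical.arbitrary α
  ⟨F^[n] k₀, hF.isFixedPt_iterate k₀, fun _ hk => hF.eq_of_isFixedPt hk (hF.isFixedPt_iterate k₀)⟩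

end IsCausal

section Independence

variable {Ω β E : Type*} [MeasurableSpace Ω] [MeasurableSpace E]
  {μ : Measure Ω} {K : Ω → β} {U : Ω → E} {T : β → Set E}

theorem measure_setOf_mem_eq_tsum_of_indepFun [MeasurableSpace β] [Countable β]
    [MeasurableSingletonClass β]
    (hK : Measurable K) (hU : Measurable U) (hind : IndepFun K U μ)
    (hT : ∀ k, MeasurableSet (T k)) :
    μ {ω | U ω ∈ T (K ω)} = ∑' k, μ {ω | K ω = k} * μ (U ⁻¹' T k) := by
  have hunion : {ω | U ω ∈ T (K ω)} = ⋃ k, K ⁻¹' {k} ∩ U ⁻¹' T k := by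
    ext ω; simp
  rw [hunion, measure_iUnion]
  · exact tsum_congr fun k =>
      hind.measure_inter_preimage_eq_mul _ _ (measurableSet_singleton k) (hT k)
  · intro k k' hkk'
    exact Set.disjoint_left.2 fun ω h₁ h₂ => hkk' (h₁.1.symm.trans h₂.1)
  · exact fun k => (hK (measurableSet_singleton k)).inter (hU (hT k))

theorem tsum_measure_preimage_eq_one [Countable β] [IsProbabilityMeasure μ]
    (hU : Measurable U) (hT : ∀ k, MeasurableSet (T k)) (hpart : ∀ u, ∃! k, u ∈ T k) :
    ∑' k, μ (U ⁻¹' T k) = 1 := by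
  have hdisj : Pairwise (Disjoint on fun k => U ⁻¹' T k) := fun k k' hkk' =>
    Set.disjoint_left.2 fun ω h₁ h₂ => hkk' ((hpart (U ω)).unique h₁ h₂)
  have hcover : ⋃ k, U ⁻¹' T k = Set.univ :=
    Set.eq_univ_of_forall fun ω => Set.mem_iUnion.2 (hpart (U ω)).exists
  rw [← measure_iUnion hdisj fun k => hU (hT k), hcover, measure_univ]

end Independence

theorem key_guessing_probability_general {Ω : Type*} [MeasurableSpace Ω]
    (μ : Measure Ω) [IsProbabilityMeasure μ]
    {E : Type*} [MeasurableSpace E]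
    (A H : ℕ) (hA : 1 ≤ A)
    (K : Ω → (Fin H → Fin A)) (hKmeas : Measurable K)
    (hKunif : ∀ k : Fin H → Fin A, μ {ω | K ω = k} = 1 / (A : ℝ≥0∞) ^ H)
    (U : Ω → E) (hUmeas : Measurable U)
    (hindep : ProbabilityTheory.IndepFun K U μ)
    (g : Fin H → (Fin H → Fin A) → E → Fin A)
    (hgmeas : ∀ h : Fin H, Measurable (fun p : (Fin H → Fin A) × E => g h p.1 p.2))
    (hgprefix : ∀ (h : Fin H) (k k' : Fin H → Fin A) (u : E),
      (∀ j : Fin H, j < h → k j = k' j) → g h k u = g h k' u) :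
    μ {ω | ∀ h : Fin H, g h (K ω) (U ω) = K ω h} = 1 / (A : ℝ≥0∞) ^ H := by
  have : Nonempty (Fin A) := ⟨⟨0, hA⟩⟩
  let T : (Fin H → Fin A) → Set E := fun k => {u | ∀ h, g h k u = k h}
  have hT : ∀ k, MeasurableSet (T k) := fun k => by
    simp only [T, Set.ofPred_forall]
    exact .iInter fun h =>
      (hgmeas h).comp (measurable_const.prodMk measurable_id) (measurableSet_singleton (k h))
  have hpart : ∀ u, ∃! k, u ∈ T k := fun u => by
    simpa [T, IsFixedPt, funext_iff] using
      IsCausal.existsUnique_isFixedPt fun k k' h => hgprefix h k k' u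
  change μ {ω | U ω ∈ T (K ω)} = _
  rw [measure_setOf_mem_eq_tsum_of_indepFun hKmeas hUmeas hindep hT]
  simp only [hKunif]
  rw [ENNReal.tsum_mul_left, tsum_measure_preimage_eq_one hUmeas hT hpart, mul_one]

/-- A uniformly random hidden key `K` of length `H` over `A` actions,
independent of the guesser's internal randomness `U`, is guessed entirely
correctly with probability exactly `A^(−H)`, when the guess at each step `h` may
depend only on the key coordinates before `h` and on `U`. -/
theorem key_guessing_probability {Ω : Type*} [MeasurableSpace Ω]
    (μ : Measure Ω) [IsProbabilityMeasure μ]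
    {E : Type*} [MeasurableSpace E]
    (A H : ℕ) (hA : 1 ≤ A) (hH : 1 ≤ H)
    (K : Ω → (Fin H → Fin A)) (hKmeas : Measurable K)
    (hKunif : ∀ k : Fin H → Fin A, μ {ω | K ω = k} = 1 / (A : ℝ≥0∞) ^ H)
    (U : Ω → E) (hUmeas : Measurable U)
    (hindep : ProbabilityTheory.IndepFun K U μ)
    (g : Fin H → (Fin H → Fin A) → E → Fin A)
    (hgmeas : ∀ h : Fin H, Measurable (fun p : (Fin H → Fin A) × E => g h p.1 p.2))
    (hgprefix : ∀ (h : Fin H) (k k' : Fin H → Fin A) (u : E),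
      (∀ j : Fin H, j < h → k j = k' j) → g h k u = g h k' u) :
    μ {ω | ∀ h : Fin H, g h (K ω) (U ω) = K ω h} = 1 / (A : ℝ≥0∞) ^ H :=
  key_guessing_probability_general μ A H hA K hKmeas hKunif U hUmeas hindep g hgmeas hgprefix
end
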